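/- arXiv:1307.2141 — 2 statements merged into one kernel-verified Lean document; each statement's English description precedes it below -/
import Mathlib

section
/- Let G be a connected graph on [n] that has the interval property with respect to its labeling. Then the bipartite graph H = in_lex(G) on the vertex set {x_1,…,x_n} ∪ {y_1,…,y_n} is weakly chordal. -/
/-!
Let `x_{i₀}` be the vertex of smallest index on an induced cycle of `in_lex(G)` of length at
least 5, with cycle neighbours `y_j`, `y_{j'}`, say `j ≤ j'`, and let `x_i` be the other
neighbour of `y_j`. Then `i₀ ≤ i < j ≤ j'` and `{i₀, j'} ∈ E(G)`, so the interval property gives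
`{i, j'} ∈ E(G)`: the edge `x_i y_{j'}` is a chord. For the complement, any bipartite graph
works: among five consecutive vertices of an induced cycle of length at least 5 in its
complement, the non-adjacent pairs form a 5-cycle of the bipartite graph itself.
-/

open SimpleGraph

/-- `G` has the interval property with respect to its labeling: for every edge `{i,j}`
with `i < j`, every pair `{k,l}` with `i ≤ k < l ≤ j` is an edge of `G`. -/
def HasIntervalProperty {n : ℕ} (G : SimpleGraph (Fin n)) : Prop :=
  ∀ i j k l : Fin n, G.Adj i j → i < j → i ≤ k → k < l → l ≤ j → G.Adj k l

/-- The bipartite graph `in_lex(G)` on `{x_1,…,x_n} ∪ {y_1,…,y_n}` (here `Sum.inl i = x_i`,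
`Sum.inr j = y_j`) whose edges are the pairs `{x_i, y_j}` with `i < j` and `{i,j} ∈ E(G)`. -/
def inLex {n : ℕ} (G : SimpleGraph (Fin n)) : SimpleGraph (Fin n ⊕ Fin n) :=
  SimpleGraph.fromRel (fun u v =>
    ∃ i j : Fin n, i < j ∧ G.Adj i j ∧ u = Sum.inl i ∧ v = Sum.inr j)

/-- `M` is an induced matching of `H`: a set of edges of `H`, pairwise vertex-disjoint,
such that no edge of `H` joins two vertices lying in distinct edges of `M`. -/
def IsInducedMatching {V : Type*} (H : SimpleGraph V) (M : Set (Sym2 V)) : Prop :=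
  M ⊆ H.edgeSet ∧
  (∀ e ∈ M, ∀ f ∈ M, e ≠ f → ∀ v, v ∈ e → v ∉ f) ∧
  (∀ e ∈ M, ∀ f ∈ M, e ≠ f → ∀ u ∈ e, ∀ v ∈ f, ¬ H.Adj u v)

/-- An indexed family of `m` pairwise distinct edges forming an induced matching of `H`. -/
def IsInducedMatchingFamily {V : Type*} (H : SimpleGraph V) {m : ℕ} (f : Fin m → Sym2 V) : Prop :=
  Function.Injective f ∧ IsInducedMatching H (Set.range f)

/-- `p` is an induced path of length `l` in `G`: `l+1` distinct vertices such that the edges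
of `G` among them are exactly the consecutive pairs. -/
def IsInducedPath {V : Type*} (G : SimpleGraph V) (l : ℕ) (p : Fin (l + 1) → V) : Prop :=
  Function.Injective p ∧
  ∀ a b : Fin (l + 1), G.Adj (p a) (p b) ↔ ((a : ℕ) + 1 = b ∨ (b : ℕ) + 1 = a)

/-- `c` is an induced cycle of length `k` in `H`: `k` distinct vertices such that the edges
of `H` among them are exactly the consecutive pairs (cyclically). -/
def IsInducedCycle {V : Type*} (H : SimpleGraph V) (k : ℕ) (c : Fin k → V) : Prop :=
  3 ≤ k ∧ Function.Injective c ∧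
  ∀ a b : Fin k, H.Adj (c a) (c b) ↔ (((a : ℕ) + 1) % k = b ∨ ((b : ℕ) + 1) % k = a)

/-- Condition (∗) for an induced matching `{x_{i t}, y_{j t}}` of `in_lex(G)`: for every
index `a` and vertex `t < i a` with `{t, j a} ∈ E(G)`, replacing `x_{i a}` by `x_t`
does not yield an induced matching of `in_lex(G)`. -/
def CondStar {n m : ℕ} (G : SimpleGraph (Fin n)) (i j : Fin m → Fin n) : Prop :=
  ∀ a : Fin m, ∀ t : Fin n, t < i a → G.Adj t (j a) →
    ¬ IsInducedMatchingFamily (inLex G)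
        (fun u => if u = a then s(Sum.inl t, Sum.inr (j u))
                  else s(Sum.inl (i u), Sum.inr (j u)))

namespace Fin

variable {k : ℕ} [NeZero k]

open Fin.NatCast

lemma add_natCast_ne_self (a : Fin k) {m : ℕ} (hm : 0 < m) (hmk : m < k) : a + m ≠ a := by
  rw [Ne, add_eq_left, natCast_eq_zero]
  exact fun h => absurd (Nat.le_of_dvd hm h) (by omega)

lemma val_add_one_mod_eq_iff (a b : Fin k) : ((a : ℕ) + 1) % k = b ↔ a + 1 = b := by
  rw [Fin.ext_iff, Fin.val_add, Fin.val_one', Nat.add_mod_mod]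

end Fin

namespace IsInducedCycle

variable {V : Type*} {K : SimpleGraph V} {k : ℕ} [NeZero k] {c : Fin k → V}

open Fin.NatCast Fin.CommRing

lemma adj_iff (hc : IsInducedCycle K k c) (a b : Fin k) :
    K.Adj (c a) (c b) ↔ a + 1 = b ∨ b + 1 = a := by
  rw [hc.2.2, Fin.val_add_one_mod_eq_iff, Fin.val_add_one_mod_eq_iff]

lemma adj_add_one (hc : IsInducedCycle K k c) (a : Fin k) : K.Adj (c a) (c (a + 1)) :=
  (hc.adj_iff a (a + 1)).2 (Or.inl rfl)

lemma adj_sub_one (hc : IsInducedCycle K k c) (a : Fin k) : K.Adj (c a) (c (a - 1)) :=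
  (hc.adj_iff a (a - 1)).2 (Or.inr (sub_add_cancel a 1))

lemma not_adj_add (hc : IsInducedCycle K k c) (a : Fin k) {m : ℕ} (hm : 2 ≤ m)
    (hmk : m + 2 ≤ k) :
    ¬ K.Adj (c a) (c (a + m)) := by
  obtain ⟨m, rfl⟩ : ∃ m', m = m' + 2 := ⟨m - 2, by omega⟩
  rw [hc.adj_iff]
  rintro (h | h)
  · exact (a + 1).add_natCast_ne_self (m := m + 1) (by omega) (by omega)
      (by push_cast at h ⊢; linear_combination -h)
  · exact a.add_natCast_ne_self (m := m + 3) (by omega) (by omega)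
      (by push_cast at h ⊢; linear_combination h)

lemma ne_add (hc : IsInducedCycle K k c) (a : Fin k) {m : ℕ} (hm : 0 < m) (hmk : m < k) :
    c a ≠ c (a + m) :=
  fun h => a.add_natCast_ne_self hm hmk (hc.2.1 h).symm

end IsInducedCycle

open Fin.NatCast in
theorem not_isInducedCycle_compl_of_isBipartite {V : Type*} {H : SimpleGraph V}
    (hH : H.IsBipartite) {k : ℕ} (hk : 5 ≤ k) (c : Fin k → V) :
    ¬ IsInducedCycle Hᶜ k c := by
  intro hc
  have : NeZero k := ⟨by omega⟩
  obtain ⟨C⟩ := hH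
  have hC : ∀ i m : ℕ, 2 ≤ m → m ≤ 3 → i + m ≤ 4 → C (c i) ≠ C (c ↑(i + m)) :=
    fun i m hm hm3 him => C.valid <| by
      simpa [compl_adj, hc.ne_add i (by omega : 0 < m) (by omega)] using
        hc.not_adj_add i hm (by omega)
  -- `c 0, c 2, c 4, c 1, c 3` is an odd closed walk in `H`.
  have hodd : ∀ x₀ x₁ x₂ x₃ x₄ : Fin 2,
      x₀ ≠ x₂ → x₂ ≠ x₄ → x₁ ≠ x₄ → x₁ ≠ x₃ → x₀ ≠ x₃ → False := by
    omega
  exact hodd _ _ _ _ _ (hC 0 2 le_rfl (by norm_num) (by norm_num))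
    (hC 2 2 le_rfl (by norm_num) (by norm_num)) (hC 1 3 (by norm_num) le_rfl (by norm_num))
    (hC 1 2 le_rfl (by norm_num) (by norm_num)) (hC 0 3 (by norm_num) le_rfl (by norm_num))

section InLex

variable {n : ℕ} {G : SimpleGraph (Fin n)} {i i' j j' : Fin n}

open Sum

@[simp]
lemma inLex_adj_inl_inr : (inLex G).Adj (inl i) (inr j) ↔ i < j ∧ G.Adj i j := by
  simp [inLex]

@[simp]
lemma inLex_not_adj_inl_inl : ¬ (inLex G).Adj (inl i) (inl i') := by
  simp [inLex]

@[simp]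
lemma inLex_not_adj_inr_inr : ¬ (inLex G).Adj (inr j) (inr j') := by
  simp [inLex]

lemma inLex_isBipartite : (inLex G).IsBipartite :=
  ⟨Coloring.mk (fun v => if v.isLeft then 0 else 1) fun {v w} h => by
    cases v <;> cases w <;> simp_all⟩

lemma exists_eq_inr_of_inLex_adj_inl {u : Fin n ⊕ Fin n} (h : (inLex G).Adj (inl i) u) :
    ∃ j, u = inr j := by
  cases u <;> simp_all

lemma exists_eq_inl_of_inLex_adj_inr {u : Fin n ⊕ Fin n} (h : (inLex G).Adj (inr j) u) :
    ∃ i, u = inl i := by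
  cases u <;> simp_all

lemma HasIntervalProperty.inLex_adj (hG : HasIntervalProperty G)
    (h : (inLex G).Adj (inl i) (inr j')) (h' : (inLex G).Adj (inl i') (inr j))
    (hi : i ≤ i') (hj : j ≤ j') : (inLex G).Adj (inl i') (inr j') := by
  rw [inLex_adj_inl_inr] at h h' ⊢
  exact ⟨h'.1.trans_le hj, hG i j' i' j' h.2 h.1 hi (h'.1.trans_le hj) le_rfl⟩

end InLex

open Sum Fin.NatCast Fin.CommRing in
theorem HasIntervalProperty.not_isInducedCycle_inLex {n : ℕ} {G : SimpleGraph (Fin n)}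
    (hG : HasIntervalProperty G) {k : ℕ} (hk : 5 ≤ k) (c : Fin k → Fin n ⊕ Fin n) :
    ¬ IsInducedCycle (inLex G) k c := by
  intro hc
  have : NeZero k := ⟨by omega⟩
  have hS : {i | ∃ a, c a = inl i}.Nonempty := by
    cases h0 : c 0 with
    | inl i => exact ⟨i, 0, h0⟩
    | inr j =>
      exact (exists_eq_inl_of_inLex_adj_inr (h0 ▸ hc.adj_add_one 0)).imp fun i hi => ⟨_, hi⟩
  obtain ⟨i₀, ⟨a, ha⟩, hi₀⟩ := wellFounded_lt.has_min _ hS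
  have hmin : ∀ b i, c b = inl i → i₀ ≤ i := fun b i hb => not_lt.1 (hi₀ i ⟨b, hb⟩)
  have hnext := hc.adj_add_one a
  have hprev := hc.adj_sub_one a
  rw [ha] at hnext hprev
  obtain ⟨j, hj⟩ := exists_eq_inr_of_inLex_adj_inl hnext
  obtain ⟨j', hj'⟩ := exists_eq_inr_of_inLex_adj_inl hprev
  rw [hj] at hnext
  rw [hj'] at hprev
  rcases le_total j j' with hle | hle
  · have h := hc.adj_add_one (a + 1)
    rw [hj] at h
    obtain ⟨i, hi⟩ := exists_eq_inl_of_inLex_adj_inr h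
    rw [hi] at h
    refine hc.not_adj_add (a - 1) (m := 3) (by norm_num) (by omega) ?_
    rw [show a - 1 + ((3 : ℕ) : Fin k) = a + 1 + 1 by push_cast; ring, hi, hj']
    exact (hG.inLex_adj hprev h.symm (hmin _ _ hi) hle).symm
  · have h := hc.adj_sub_one (a - 1)
    rw [hj'] at h
    obtain ⟨i, hi⟩ := exists_eq_inl_of_inLex_adj_inr h
    rw [hi] at h
    refine hc.not_adj_add (a - 1 - 1) (m := 3) (by norm_num) (by omega) ?_
    rw [show a - 1 - 1 + ((3 : ℕ) : Fin k) = a + 1 by push_cast; ring, hi, hj]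
    exact hG.inLex_adj hnext h.symm (hmin _ _ hi) hle

theorem stmt_3_general {n : ℕ} (G : SimpleGraph (Fin n))
    (hG : HasIntervalProperty G) :
    (∀ k : ℕ, 5 ≤ k → ∀ c : Fin k → (Fin n ⊕ Fin n), ¬ IsInducedCycle (inLex G) k c) ∧
    (∀ k : ℕ, 5 ≤ k → ∀ c : Fin k → (Fin n ⊕ Fin n), ¬ IsInducedCycle (inLex G)ᶜ k c) :=
  ⟨fun _ hk c => hG.not_isInducedCycle_inLex hk c,
    fun _ hk c => not_isInducedCycle_compl_of_isBipartite inLex_isBipartite hk c⟩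

/-- If `G` is connected and has the interval property, then the bipartite graph
`H = in_lex(G)` is weakly chordal: neither `H` nor its complement contains an induced
cycle of length at least 5. -/
theorem stmt_3 {n : ℕ} (G : SimpleGraph (Fin n)) (hconn : G.Connected)
    (hG : HasIntervalProperty G) :
    (∀ k : ℕ, 5 ≤ k → ∀ c : Fin k → (Fin n ⊕ Fin n), ¬ IsInducedCycle (inLex G) k c) ∧
    (∀ k : ℕ, 5 ≤ k → ∀ c : Fin k → (Fin n ⊕ Fin n), ¬ IsInducedCycle (inLex G)ᶜ k c) :=
  stmt_3_general G hG
end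

section
/- Let G be a connected graph on [n] that has the interval property with respect to its labeling, let H = in_lex(G), and let ℓ be the length of the longest induced path of G. Then indmatch(H) ≥ ℓ. -/
open SimpleGraph

/-!
In a graph with the interval property an induced path `i₀, i₁, …, i_ℓ` is monotone in the
labeling: a turn `x < y > z` (or `x > y < z`) at two non-adjacent vertices `x, z` would, by the
interval property applied to the longer of the two edges at `y`, force the edge `{x, z}`.
Along an increasing induced path the edges `{x_{i_t}, y_{i_{t+1}}}` of `in_lex(G)` form an
induced matching: an edge `{x_{i_s}, y_{i_{t+1}}}` with `s ≠ t` would come from an edge of the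
path, so `i_{t+1}` would precede `i_s`, which contradicts `i_s < i_{t+1}`.
-/

open SimpleGraph

section InLex

variable {n : ℕ} (G : SimpleGraph (Fin n))

@[simp]
lemma inLex_adj_inl_inr_s6 (a b : Fin n) :
    (inLex G).Adj (Sum.inl a) (Sum.inr b) ↔ a < b ∧ G.Adj a b := by
  simp [inLex, fromRel_adj]

@[simp]
lemma inLex_not_adj_inl_inl_s6 (a b : Fin n) : ¬ (inLex G).Adj (Sum.inl a) (Sum.inl b) := by
  simp [inLex, fromRel_adj]

@[simp]
lemma inLex_not_adj_inr_inr_s6 (a b : Fin n) : ¬ (inLex G).Adj (Sum.inr a) (Sum.inr b) := by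
  simp [inLex, fromRel_adj]

end InLex

namespace HasIntervalProperty

variable {n : ℕ} {G : SimpleGraph (Fin n)} (hG : HasIntervalProperty G) {x y z : Fin n}
include hG

lemma adj_of_lt_of_lt (hxy : G.Adj x y) (hzy : G.Adj z y) (hx : x < y) (hz : z < y)
    (hxz : x ≠ z) : G.Adj x z := by
  rcases hxz.lt_or_gt with h | h
  · exact hG x y x z hxy hx le_rfl h hz.le
  · exact (hG z y z x hzy hz le_rfl h hx.le).symm

lemma adj_of_gt_of_gt (hyx : G.Adj y x) (hyz : G.Adj y z) (hx : y < x) (hz : y < z)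
    (hxz : x ≠ z) : G.Adj x z := by
  rcases hxz.lt_or_gt with h | h
  · exact hG y z x z hyz hz hx.le h le_rfl
  · exact (hG y x z x hyx hx hz.le h le_rfl).symm

lemma lt_iff_lt_of_induced (hxy : G.Adj x y) (hyz : G.Adj y z) (hxz : ¬ G.Adj x z)
    (hne : x ≠ z) : x < y ↔ y < z := by
  constructor
  · intro hx
    by_contra hz
    exact hxz (hG.adj_of_lt_of_lt hxy hyz.symm hx ((not_lt.1 hz).lt_of_ne hyz.ne') hne)
  · intro hz
    by_contra hx
    exact hxz (hG.adj_of_gt_of_gt hxy.symm hyz ((not_lt.1 hx).lt_of_ne hxy.ne') hz hne)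

end HasIntervalProperty

namespace IsInducedPath

variable {n l : ℕ} {G : SimpleGraph (Fin n)} {p : Fin (l + 1) → Fin n}

lemma comp_rev (hp : IsInducedPath G l p) : IsInducedPath G l (p ∘ Fin.rev) := by
  refine ⟨hp.1.comp Fin.rev_injective, fun a b => ?_⟩
  rw [Function.comp_apply, Function.comp_apply, hp.2, Fin.val_rev, Fin.val_rev]
  omega

lemma lt_succ_iff_lt_succ_of_succ_eq (hG : HasIntervalProperty G) (hp : IsInducedPath G l p)
    {i j : Fin l} (hij : (i : ℕ) + 1 = j) :
    p i.castSucc < p i.succ ↔ p j.castSucc < p j.succ := by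
  have hmid : i.succ = j.castSucc := Fin.ext (by simpa using hij)
  rw [hmid]
  refine hG.lt_iff_lt_of_induced ((hp.2 _ _).2 (Or.inl (by simp [hij])))
    ((hp.2 _ _).2 (Or.inl (by simp))) ?_
    (hp.1.ne (Fin.ne_of_val_ne (by rw [Fin.val_castSucc, Fin.val_succ]; omega)))
  rw [hp.2, Fin.val_castSucc, Fin.val_succ]
  omega

lemma lt_succ_iff_lt_succ (hG : HasIntervalProperty G) (hp : IsInducedPath G l p)
    (i j : Fin l) : p i.castSucc < p i.succ ↔ p j.castSucc < p j.succ := by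
  have key : ∀ k (i j : Fin l), (j : ℕ) = i + k →
      (p i.castSucc < p i.succ ↔ p j.castSucc < p j.succ) := by
    intro k
    induction k with
    | zero =>
      intro i j h
      obtain rfl : i = j := Fin.ext h.symm
      rfl
    | succ k ih =>
      intro i j h
      exact (ih i ⟨i + k, by omega⟩ rfl).trans
        (hp.lt_succ_iff_lt_succ_of_succ_eq hG (by dsimp only; omega))
  rcases le_total i j with h | h
  · exact key (j - i) i j (by omega)
  · exact (key (i - j) j i (by omega)).symm

lemma strictMono_or_strictAnti (hG : HasIntervalProperty G) (hp : IsInducedPath G l p) :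
    StrictMono p ∨ StrictAnti p := by
  by_cases h : ∀ i : Fin l, p i.castSucc < p i.succ
  · exact Or.inl (Fin.strictMono_iff_lt_succ.2 h)
  · obtain ⟨i, hi⟩ := not_forall.1 h
    refine Or.inr (Fin.strictAnti_iff_succ_lt.2 fun j => ?_)
    have hj : ¬ p j.castSucc < p j.succ := fun hj => hi ((hp.lt_succ_iff_lt_succ hG i j).2 hj)
    exact (not_lt.1 hj).lt_of_ne (hp.1.ne j.castSucc_lt_succ.ne')

lemma exists_strictMono (hG : HasIntervalProperty G) (hp : IsInducedPath G l p) :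
    ∃ q : Fin (l + 1) → Fin n, IsInducedPath G l q ∧ StrictMono q := by
  rcases hp.strictMono_or_strictAnti hG with h | h
  · exact ⟨p, hp, h⟩
  · exact ⟨p ∘ Fin.rev, hp.comp_rev, StrictAnti.comp h Fin.rev_strictAnti⟩

/-- The edges `{x_{q t}, y_{q (t+1)}}` of `in_lex(G)` along the path `q`. -/
def inLexMatching (q : Fin (l + 1) → Fin n) (t : Fin l) : Sym2 (Fin n ⊕ Fin n) :=
  s(Sum.inl (q t.castSucc), Sum.inr (q t.succ))

variable {q : Fin (l + 1) → Fin n}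

lemma not_inLex_adj (hq : IsInducedPath G l q) (hmono : StrictMono q) {s t : Fin l}
    (hst : s ≠ t) : ¬ (inLex G).Adj (Sum.inl (q s.castSucc)) (Sum.inr (q t.succ)) := by
  rw [inLex_adj_inl_inr_s6]
  rintro ⟨hlt, hadj⟩
  rcases (hq.2 _ _).1 hadj with h | h
  · exact hst (Fin.ext (by simpa using h))
  · rw [Fin.val_succ, Fin.val_castSucc] at h
    exact hlt.not_gt (hmono (Fin.lt_def.2 (by rw [Fin.val_succ, Fin.val_castSucc]; omega)))

lemma isInducedMatchingFamily_inLexMatching (hq : IsInducedPath G l q) (hmono : StrictMono q) :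
    IsInducedMatchingFamily (inLex G) (inLexMatching q) := by
  have hdisj : ∀ s t, s ≠ t → ∀ v ∈ inLexMatching q s, v ∉ inLexMatching q t := by
    intro s t hst v hs ht
    simp only [inLexMatching, Sym2.mem_iff] at hs ht
    rcases hs with rfl | rfl <;> rcases ht with h | h <;> simp [hq.1.eq_iff, hst] at h
  refine ⟨fun s t h => ?_, ?_, ?_, ?_⟩
  · by_contra hst
    exact hdisj s t hst _ (Sym2.mem_mk_left _ _) (h ▸ Sym2.mem_mk_left _ _)
  · rintro _ ⟨t, rfl⟩
    exact (inLex_adj_inl_inr_s6 G _ _).2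
      ⟨hmono t.castSucc_lt_succ, (hq.2 _ _).2 (Or.inl (by simp))⟩
  · rintro _ ⟨s, rfl⟩ _ ⟨t, rfl⟩ hne
    exact hdisj s t (fun h => hne (h ▸ rfl))
  · rintro _ ⟨s, rfl⟩ _ ⟨t, rfl⟩ hne u hu v hv
    have hst : s ≠ t := fun h => hne (h ▸ rfl)
    simp only [inLexMatching, Sym2.mem_iff] at hu hv
    rcases hu with rfl | rfl <;> rcases hv with rfl | rfl
    · exact inLex_not_adj_inl_inl_s6 G _ _
    · exact hq.not_inLex_adj hmono hst
    · exact fun h => hq.not_inLex_adj hmono hst.symm h.symm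
    · exact inLex_not_adj_inr_inr_s6 G _ _

end IsInducedPath

theorem stmt_6_general {n : ℕ} (G : SimpleGraph (Fin n))
    (hG : HasIntervalProperty G) (ℓ m : ℕ)
    (hℓ : IsGreatest {l : ℕ | ∃ p : Fin (l + 1) → Fin n, IsInducedPath G l p} ℓ)
    (hm : IsGreatest {k : ℕ | ∃ M : Set (Sym2 (Fin n ⊕ Fin n)),
            IsInducedMatching (inLex G) M ∧ M.ncard = k} m) :
    ℓ ≤ m := by
  obtain ⟨p, hp⟩ := hℓ.1
  obtain ⟨q, hq, hmono⟩ := hp.exists_strictMono hG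
  have hM := hq.isInducedMatchingFamily_inLexMatching hmono
  exact hm.2 ⟨_, hM.2, by simp [Set.ncard_range_of_injective hM.1]⟩

/-- If `G` is connected with the interval property, `ℓ` is the length of the longest
induced path of `G` and `m = indmatch(in_lex(G))`, then `m ≥ ℓ`. -/
theorem stmt_6 {n : ℕ} (G : SimpleGraph (Fin n)) (hconn : G.Connected)
    (hG : HasIntervalProperty G) (ℓ m : ℕ)
    (hℓ : IsGreatest {l : ℕ | ∃ p : Fin (l + 1) → Fin n, IsInducedPath G l p} ℓ)
    (hm : IsGreatest {k : ℕ | ∃ M : Set (Sym2 (Fin n ⊕ Fin n)),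
            IsInducedMatching (inLex G) M ∧ M.ncard = k} m) :
    ℓ ≤ m :=
  stmt_6_general G hG ℓ m hℓ hm
end
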